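/- Let n ≥ 1 and let U, V be 2^n × 2^n unitary matrices. Then C_LHST(U,V) ≤ C_HST(U,V) ≤ n · C_LHST(U,V). -/

import Mathlib

open Matrix Kronecker Complex

noncomputable section

/-- The Hilbert-Schmidt test cost `C_HST(U,V) = 1 - |Tr(V†U)|²/d²` for `d × d` matrices. -/
def CHSTd (d : ℕ) (U V : Matrix (Fin d) (Fin d) ℂ) : ℝ :=
  1 - ‖(Vᴴ * U).trace‖ ^ 2 / (d : ℝ) ^ 2

/-- The Hilbert-Schmidt test cost for unitaries on `n` qubits (`d = 2^n`). -/
def CHST (n : ℕ) (U V : Matrix (Fin n → Fin 2) (Fin n → Fin 2) ℂ) : ℝ :=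
  1 - ‖(Vᴴ * U).trace‖ ^ 2 / ((2 : ℝ) ^ n) ^ 2

/-- The local channel `E_j(ρ) = Tr_{j̄}[ W (ρ_(j) ⊗ I/2^(n-1)) W† ]`, where `ρ` is placed on
qubit `j`, the maximally mixed state on the other qubits, and the partial trace is over all
qubits except `j`.  (The sum over `r` double-counts the assignments of the qubits other than
`j`, whence the extra factor `1/2`.) -/
def Ej (n : ℕ) (j : Fin n) (W : Matrix (Fin n → Fin 2) (Fin n → Fin 2) ℂ)
    (ρ : Matrix (Fin 2) (Fin 2) ℂ) : Matrix (Fin 2) (Fin 2) ℂ :=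
  Matrix.of fun a b =>
    (1 / 2 ^ (n - 1) : ℂ) * (1 / 2) *
      ∑ r : Fin n → Fin 2, ∑ s : Fin n → Fin 2, ∑ t : Fin n → Fin 2,
        (if Function.update s j 0 = Function.update t j 0 then
          W (Function.update r j a) s * ρ (s j) (t j) * star (W (Function.update r j b) t)
        else 0)

/-- The two-qubit maximally entangled state `|Φ₂⁺⟩ = (|00⟩+|11⟩)/√2`. -/
def phi2 : (Fin 2 × Fin 2) → ℂ := fun p => if p.1 = p.2 then ((1 / Real.sqrt 2 : ℝ) : ℂ) else 0

/-- The projector `|Φ₂⁺⟩⟨Φ₂⁺|`. -/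
def phi2Proj : Matrix (Fin 2 × Fin 2) (Fin 2 × Fin 2) ℂ :=
  Matrix.of fun p q => if p.1 = p.2 ∧ q.1 = q.2 then (1 / 2 : ℂ) else 0

/-- `(E ⊗ id)(ρ)` for a map `E` on one-qubit matrices and a two-qubit matrix `ρ`. -/
def tensorId (E : Matrix (Fin 2) (Fin 2) ℂ → Matrix (Fin 2) (Fin 2) ℂ)
    (ρ : Matrix (Fin 2 × Fin 2) (Fin 2 × Fin 2) ℂ) :
    Matrix (Fin 2 × Fin 2) (Fin 2 × Fin 2) ℂ :=
  Matrix.of fun p q => ∑ a : Fin 2, ∑ b : Fin 2,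
    ρ (a, p.2) (b, q.2) * E (Matrix.single a b 1) p.1 q.1

/-- The entanglement fidelity `F_e^(j) = ⟨Φ₂⁺|(E_j ⊗ id)(|Φ₂⁺⟩⟨Φ₂⁺|)|Φ₂⁺⟩`
(as a complex number), with `W = U V†`. -/
def FeC (n : ℕ) (j : Fin n) (U V : Matrix (Fin n → Fin 2) (Fin n → Fin 2) ℂ) : ℂ :=
  star phi2 ⬝ᵥ (tensorId (Ej n j (U * Vᴴ)) phi2Proj).mulVec phi2

/-- The entanglement fidelity `F_e^(j)` (a real number). -/
def Fe (n : ℕ) (j : Fin n) (U V : Matrix (Fin n → Fin 2) (Fin n → Fin 2) ℂ) : ℝ :=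
  (FeC n j U V).re

/-- The local Hilbert-Schmidt cost for qubit `j`: `C_LHST^(j)(U,V) = 1 - F_e^(j)`. -/
def CLHSTj (n : ℕ) (j : Fin n) (U V : Matrix (Fin n → Fin 2) (Fin n → Fin 2) ℂ) : ℝ :=
  1 - Fe n j U V

/-- The local Hilbert-Schmidt cost `C_LHST(U,V) = (1/n) Σ_j C_LHST^(j)(U,V)`. -/
def CLHST (n : ℕ) (U V : Matrix (Fin n → Fin 2) (Fin n → Fin 2) ℂ) : ℝ :=
  (1 / n : ℝ) * ∑ j : Fin n, CLHSTj n j U V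

end

/-! Expand `W = U V†` in the orthonormal basis of normalised Pauli strings `P_m`,
`m : Fin n → Fin 4`, and put `q m = |⟨P_m, W⟩|²`. Parseval and unitarity give `∑ q = 2^n`, and
`q 0 = |Tr W|² / 2^n`, so `C_HST = 2^{-n} ∑_{m ≠ 0} q m`. The fidelity `F_e^(j)` equals
`‖Tr_j W‖² / 2^{n+1}`, where `Tr_j` traces out qubit `j`; the strings with `m j = 0` are, up to the
factor `1/√2`, the Pauli expansion of `Tr_j W`, so `C_LHST^(j) = 2^{-n} ∑_{m j ≠ 0} q m`.
Since `{m ≠ 0} = ⋃_j {m j ≠ 0}`, the two inequalities are monotonicity and the union bound. -/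

noncomputable section

open Finset ComplexConjugate

theorem sum_normSq_sum_mul_of_completeness {M P : Type*} [Fintype M] [Fintype P] [DecidableEq P]
    (f : M → P → ℝ) (hf : ∀ p p', ∑ m, f m p * f m p' = if p = p' then 1 else 0) (w : P → ℂ) :
    ∑ m, normSq (∑ p, (f m p : ℂ) * w p) = ∑ p, normSq (w p) := by
  apply ofReal_injective
  push_cast
  simp_rw [← mul_conj, map_sum, map_mul, conj_ofReal, sum_mul_sum]
  rw [sum_comm]
  refine sum_congr rfl fun p _ => ?_
  rw [sum_comm]
  calc ∑ p', ∑ m, (f m p : ℂ) * w p * ((f m p' : ℂ) * conj (w p'))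
      = ∑ p', ((∑ m, f m p * f m p' : ℝ) : ℂ) * (w p * conj (w p')) := by
        push_cast
        simp_rw [sum_mul]
        exact sum_congr rfl fun _ _ => sum_congr rfl fun _ _ => by ring
    _ = w p * conj (w p) := by simp [hf, apply_ite (ofReal : ℝ → ℂ)]

theorem sum_normSq_apply_of_mem_unitaryGroup {ι : Type*} [Fintype ι] [DecidableEq ι]
    {W : Matrix ι ι ℂ} (hW : W ∈ unitaryGroup ι ℂ) :
    ∑ r, ∑ s, normSq (W r s) = Fintype.card ι := by
  have hrow : ∀ r, ∑ s, normSq (W r s) = 1 := fun r => by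
    have := congr_fun₂ (mem_unitaryGroup_iff.mp hW) r r
    simp only [mul_apply, star_apply, one_apply_eq, RCLike.star_def, mul_conj] at this
    exact_mod_cast this
  simp [hrow]

section WeightCounting

variable {ι κ : Type*} [Fintype ι] [DecidableEq ι] [Fintype κ] [Zero κ] [DecidableEq κ]
  {q : (ι → κ) → ℝ}

theorem sum_filter_apply_ne_zero_le (hq : ∀ m, 0 ≤ q m) (j : ι) :
    ∑ m with m j ≠ 0, q m ≤ ∑ m with m ≠ 0, q m :=
  sum_le_sum_of_subset_of_nonneg (monotone_filter_right _ fun _ _ hj h0 => hj (by simp [h0]))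
    fun m _ _ => hq m

theorem sum_filter_ne_zero_le_sum_sum_filter_apply_ne_zero (hq : ∀ m, 0 ≤ q m) :
    ∑ m with m ≠ 0, q m ≤ ∑ j, ∑ m with m j ≠ 0, q m := by
  simp only [sum_filter]
  rw [sum_comm]
  refine sum_le_sum fun m _ => ?_
  split_ifs with hm
  · obtain ⟨j, hj⟩ := Function.ne_iff.mp hm
    calc q m = if m j ≠ 0 then q m else 0 := (if_pos hj).symm
      _ ≤ ∑ k, if m k ≠ 0 then q m else 0 :=
        single_le_sum (f := fun k => if m k ≠ 0 then q m else 0)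
          (fun k _ => by split_ifs <;> simp [hq m]) (mem_univ j)
  · exact sum_nonneg fun k _ => by split_ifs <;> simp [hq m]

end WeightCounting

def prodBasis {ι X κ : Type*} [Fintype ι] (B : κ → Matrix X X ℝ) (m : ι → κ) :
    Matrix (ι → X) (ι → X) ℝ :=
  of fun r s => ∏ k, B (m k) (r k) (s k)

def partialTrace {ι X : Type*} [DecidableEq ι] [Fintype X] (j : ι)
    (W : Matrix (ι → X) (ι → X) ℂ) : Matrix ({k // k ≠ j} → X) ({k // k ≠ j} → X) ℂ :=
  of fun w u => ∑ x, W ((Equiv.funSplitAt j X).symm (x, w)) ((Equiv.funSplitAt j X).symm (x, u))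

section ProductBasis

variable {ι X κ : Type*} [Fintype ι] [DecidableEq ι]

theorem sum_prodBasis_mul_prodBasis [DecidableEq X] [Fintype κ] {B : κ → Matrix X X ℝ}
    (hB : ∀ x y x' y', ∑ μ, B μ x y * B μ x' y' = if x = x' ∧ y = y' then 1 else 0)
    (r s r' s' : ι → X) :
    ∑ m : ι → κ, prodBasis B m r s * prodBasis B m r' s' = if r = r' ∧ s = s' then 1 else 0 := by
  simp_rw [prodBasis, of_apply, ← prod_mul_distrib]
  rw [← Fintype.prod_sum (fun k μ => B μ (r k) (s k) * B μ (r' k) (s' k))]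
  simp_rw [hB, Fintype.prod_boole, funext_iff, forall_and]

theorem prodBasis_funSplitAt_symm (B : κ → Matrix X X ℝ) (j : ι) (μ : κ)
    (m : {k // k ≠ j} → κ) (x y : X) (w u : {k // k ≠ j} → X) :
    prodBasis B ((Equiv.funSplitAt j κ).symm (μ, m)) ((Equiv.funSplitAt j X).symm (x, w))
        ((Equiv.funSplitAt j X).symm (y, u)) = B μ x y * prodBasis B m w u := by
  simp only [prodBasis, of_apply, Fintype.prod_eq_mul_prod_subtype_ne _ j,
    Equiv.funSplitAt_symm_apply]
  congr 1
  exact prod_congr rfl fun k _ => by simp [k.2]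

variable [Fintype X]

def basisCoeff (B : κ → Matrix X X ℝ) (W : Matrix (ι → X) (ι → X) ℂ) (m : ι → κ) : ℂ :=
  ∑ r, ∑ s, (prodBasis B m r s : ℂ) * W r s

variable [DecidableEq X] {B : κ → Matrix X X ℝ} {μ₀ : κ} {c : ℝ}

theorem sum_normSq_basisCoeff [Fintype κ]
    (hB : ∀ x y x' y', ∑ μ, B μ x y * B μ x' y' = if x = x' ∧ y = y' then 1 else 0)
    (W : Matrix (ι → X) (ι → X) ℂ) :
    ∑ m, normSq (basisCoeff B W m) = ∑ r, ∑ s, normSq (W r s) := by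
  have := sum_normSq_sum_mul_of_completeness (fun m (p : (ι → X) × (ι → X)) =>
    prodBasis B m p.1 p.2) (fun p p' => by simp [sum_prodBasis_mul_prodBasis hB, Prod.ext_iff])
    (fun p => W p.1 p.2)
  simpa [basisCoeff, Fintype.sum_prod_type] using this

theorem basisCoeff_funSplitAt_symm (hB₀ : B μ₀ = c • 1) (W : Matrix (ι → X) (ι → X) ℂ) (j : ι)
    (m : {k // k ≠ j} → κ) :
    basisCoeff B W ((Equiv.funSplitAt j κ).symm (μ₀, m)) =
      c * basisCoeff B (partialTrace j W) m := by
  simp only [basisCoeff, ← (Equiv.funSplitAt j X).symm.sum_comp, Fintype.sum_prod_type,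
    prodBasis_funSplitAt_symm, hB₀]
  simp only [Matrix.smul_apply, one_apply, smul_eq_mul, mul_ite, mul_one, mul_zero,
    apply_ite (ofReal : ℝ → ℂ), ofReal_zero, ite_mul, zero_mul, Finset.sum_ite_irrel,
    sum_const_zero, sum_ite_eq, mem_univ, if_true]
  simp only [partialTrace, of_apply, mul_sum, ofReal_mul]
  rw [sum_comm]
  refine sum_congr rfl fun w _ => ?_
  rw [sum_comm]
  exact sum_congr rfl fun u _ => sum_congr rfl fun x _ => by ring

theorem sum_normSq_basisCoeff_filter_apply_eq [Fintype κ] [DecidableEq κ]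
    (hB : ∀ x y x' y', ∑ μ, B μ x y * B μ x' y' = if x = x' ∧ y = y' then 1 else 0)
    (hB₀ : B μ₀ = c • 1) (W : Matrix (ι → X) (ι → X) ℂ) (j : ι) :
    ∑ m with m j = μ₀, normSq (basisCoeff B W m)
      = c ^ 2 * ∑ w, ∑ u, normSq (partialTrace j W w u) := by
  rw [sum_filter, ← (Equiv.funSplitAt j κ).symm.sum_comp, Fintype.sum_prod_type]
  simp only [Equiv.funSplitAt_symm_apply, dite_true, Finset.sum_ite_irrel, sum_const_zero,
    sum_ite_eq', mem_univ, if_true, basisCoeff_funSplitAt_symm hB₀, normSq_mul, normSq_ofReal,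
    ← mul_sum, sum_normSq_basisCoeff hB]
  ring

theorem basisCoeff_const (hB₀ : B μ₀ = c • 1) (W : Matrix (ι → X) (ι → X) ℂ) :
    basisCoeff B W (fun _ => μ₀) = c ^ Fintype.card ι * W.trace := by
  have hP : ∀ r s : ι → X,
      prodBasis B (fun _ => μ₀) r s = if r = s then c ^ Fintype.card ι else 0 := by
    intro r s
    simp [prodBasis, hB₀, one_apply, Fintype.prod_ite_zero, funext_iff]
  simp [basisCoeff, hP, apply_ite (ofReal : ℝ → ℂ), Matrix.trace, mul_sum]

end ProductBasis

-- Normalised `I, Z, X, iY`; taking `iY` instead of `Y` keeps the basis real.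
def pauli : Fin 4 → Matrix (Fin 2) (Fin 2) ℝ :=
  ![(√2)⁻¹ • 1, (√2)⁻¹ • !![1, 0; 0, -1], (√2)⁻¹ • !![0, 1; 1, 0], (√2)⁻¹ • !![0, 1; -1, 0]]

theorem sum_pauli_mul_pauli (x y x' y' : Fin 2) :
    ∑ μ, pauli μ x y * pauli μ x' y' = if x = x' ∧ y = y' then 1 else 0 := by
  have h : (√2)⁻¹ * (√2)⁻¹ = (2⁻¹ : ℝ) := by rw [← mul_inv, Real.mul_self_sqrt zero_le_two]
  fin_cases x <;> fin_cases y <;> fin_cases x' <;> fin_cases y' <;>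
    simp [Fin.sum_univ_four, pauli, h] <;> norm_num

theorem pauli_zero : pauli 0 = (√2)⁻¹ • 1 := rfl

def pauliWeight {ι : Type*} [Fintype ι] [DecidableEq ι]
    (W : Matrix (ι → Fin 2) (ι → Fin 2) ℂ) (m : ι → Fin 4) : ℝ :=
  normSq (basisCoeff pauli W m)

section PauliWeight

variable {ι : Type*} [Fintype ι] [DecidableEq ι]

theorem pauliWeight_nonneg (W : Matrix (ι → Fin 2) (ι → Fin 2) ℂ) (m : ι → Fin 4) :
    0 ≤ pauliWeight W m :=
  normSq_nonneg _

theorem pauliWeight_zero (W : Matrix (ι → Fin 2) (ι → Fin 2) ℂ) :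
    pauliWeight W 0 = normSq W.trace / 2 ^ Fintype.card ι := by
  rw [pauliWeight, Pi.zero_def, basisCoeff_const pauli_zero, normSq_mul, ← ofReal_pow,
    normSq_ofReal, ← mul_pow, ← pow_two, inv_pow, Real.sq_sqrt zero_le_two, inv_pow,
    div_eq_mul_inv, mul_comm]

theorem sum_pauliWeight_of_mem_unitaryGroup {W : Matrix (ι → Fin 2) (ι → Fin 2) ℂ}
    (hW : W ∈ unitaryGroup (ι → Fin 2) ℂ) :
    ∑ m, pauliWeight W m = 2 ^ Fintype.card ι := by
  simp [pauliWeight, sum_normSq_basisCoeff sum_pauli_mul_pauli,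
    sum_normSq_apply_of_mem_unitaryGroup hW]

end PauliWeight

theorem update_funSplitAt_symm {ι X : Type*} [DecidableEq ι] (j : ι) (a x : X)
    (w : {k // k ≠ j} → X) :
    Function.update ((Equiv.funSplitAt j X).symm (a, w)) j x =
      (Equiv.funSplitAt j X).symm (x, w) := by
  funext k
  by_cases hk : k = j
  · subst hk; simp
  · simp [hk]

theorem star_phi2_dotProduct_tensorId_phi2Proj_mulVec_phi2
    (E : Matrix (Fin 2) (Fin 2) ℂ → Matrix (Fin 2) (Fin 2) ℂ) :
    star phi2 ⬝ᵥ tensorId E phi2Proj *ᵥ phi2 = (∑ x, ∑ y, E (single x y 1) x y) / 4 := by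
  have h : ((√2 : ℝ) : ℂ)⁻¹ ^ 2 = 2⁻¹ := by
    rw [← ofReal_inv, ← ofReal_pow, inv_pow, Real.sq_sqrt zero_le_two]; norm_num
  simp only [dotProduct, mulVec, tensorId, phi2Proj, phi2, of_apply, Pi.star_apply,
    Fintype.sum_prod_type, Fin.sum_univ_two]
  simp only [↓reduceIte, one_div, ofReal_inv, star_inv₀, RCLike.star_def, conj_ofReal, and_self,
    one_ne_zero, and_false, zero_mul, add_zero, and_true, zero_ne_one, zero_add, mul_zero,
    star_zero]
  ring_nf
  rw [h]
  ring

section LocalChannel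

variable {n : ℕ}

theorem Ej_single_apply (j : Fin n) (W : Matrix (Fin n → Fin 2) (Fin n → Fin 2) ℂ) (x y : Fin 2) :
    Ej n j W (single x y 1) x y = 2 / 2 ^ n * ∑ w, ∑ u,
      W ((Equiv.funSplitAt j _).symm (x, w)) ((Equiv.funSplitAt j _).symm (x, u)) *
        conj (W ((Equiv.funSplitAt j _).symm (y, w)) ((Equiv.funSplitAt j _).symm (y, u))) := by
  simp only [Ej, of_apply, ← (Equiv.funSplitAt j (Fin 2)).symm.sum_comp, Fintype.sum_prod_type,
    update_funSplitAt_symm, Equiv.apply_eq_iff_eq, Prod.mk.injEq, true_and, single_apply]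
  simp only [Equiv.funSplitAt_symm_apply, dite_true, mul_ite, mul_one, mul_zero, ite_mul, zero_mul,
    ite_and, Finset.sum_ite_irrel, sum_const_zero, sum_ite_eq, mem_univ, if_true,
    RCLike.star_def, sum_const, card_univ, Fintype.card_fin, nsmul_eq_mul]
  obtain ⟨k, rfl⟩ := Nat.exists_eq_add_one_of_ne_zero j.pos.ne'
  rw [Nat.add_sub_cancel]
  push_cast
  ring

theorem sum_Ej_single_apply (j : Fin n) (W : Matrix (Fin n → Fin 2) (Fin n → Fin 2) ℂ) :
    ∑ x, ∑ y, Ej n j W (single x y 1) x y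
      = 2 / 2 ^ n * ∑ w, ∑ u, (normSq (partialTrace j W w u) : ℂ) := by
  simp only [Ej_single_apply, ← mul_sum]
  congr 1
  simp only [← mul_conj, partialTrace, of_apply, map_sum, sum_mul_sum]
  exact (sum_congr rfl fun x _ => sum_comm.trans (sum_congr rfl fun w _ => sum_comm)).trans
    (sum_comm.trans (sum_congr rfl fun w _ => sum_comm))

variable {U V : Matrix (Fin n → Fin 2) (Fin n → Fin 2) ℂ}

theorem Fe_eq_sum_pauliWeight (j : Fin n) :
    Fe n j U V = (∑ m with m j = 0, pauliWeight (U * Vᴴ) m) / 2 ^ n := by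
  have hc : (√2)⁻¹ ^ 2 = (2⁻¹ : ℝ) := by rw [inv_pow, Real.sq_sqrt zero_le_two]
  unfold pauliWeight
  rw [Fe, FeC, star_phi2_dotProduct_tensorId_phi2Proj_mulVec_phi2, sum_Ej_single_apply,
    sum_normSq_basisCoeff_filter_apply_eq sum_pauli_mul_pauli pauli_zero, hc]
  have hre : ∀ S : ℝ, ((2 / 2 ^ n * (S : ℂ)) / 4).re = 2⁻¹ * S / 2 ^ n := fun S => by
    rw [show (2 / 2 ^ n * (S : ℂ)) / 4 = ((2⁻¹ * S / 2 ^ n : ℝ) : ℂ) by push_cast; ring, ofReal_re]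
  simp only [← ofReal_sum]
  exact hre _

end LocalChannel

section Costs

variable {n : ℕ} {U V : Matrix (Fin n → Fin 2) (Fin n → Fin 2) ℂ}

theorem CHST_eq_sum_pauliWeight (hW : U * Vᴴ ∈ unitaryGroup (Fin n → Fin 2) ℂ) :
    CHST n U V = (∑ m with m ≠ 0, pauliWeight (U * Vᴴ) m) / 2 ^ n := by
  have htotal := sum_pauliWeight_of_mem_unitaryGroup hW
  rw [← sum_filter_add_sum_filter_not univ (· = 0), filter_eq', if_pos (mem_univ _), sum_singleton,
    pauliWeight_zero, trace_mul_comm] at htotal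
  simp only [Fintype.card_fin] at htotal
  rw [CHST, normSq_eq_norm_sq] at *
  field_simp at htotal ⊢
  linarith

theorem CLHSTj_eq_sum_pauliWeight (hW : U * Vᴴ ∈ unitaryGroup (Fin n → Fin 2) ℂ) (j : Fin n) :
    CLHSTj n j U V = (∑ m with m j ≠ 0, pauliWeight (U * Vᴴ) m) / 2 ^ n := by
  have htotal := sum_pauliWeight_of_mem_unitaryGroup hW
  rw [← sum_filter_add_sum_filter_not univ (· j = 0)] at htotal
  simp only [Fintype.card_fin] at htotal
  rw [CLHSTj, Fe_eq_sum_pauliWeight]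
  field_simp
  linarith

theorem CHST_nonneg (hW : U * Vᴴ ∈ unitaryGroup (Fin n → Fin 2) ℂ) : 0 ≤ CHST n U V := by
  rw [CHST_eq_sum_pauliWeight hW]
  exact div_nonneg (sum_nonneg fun m _ => pauliWeight_nonneg _ m) (by positivity)

theorem CLHSTj_le_CHST (hW : U * Vᴴ ∈ unitaryGroup (Fin n → Fin 2) ℂ) (j : Fin n) :
    CLHSTj n j U V ≤ CHST n U V := by
  rw [CLHSTj_eq_sum_pauliWeight hW, CHST_eq_sum_pauliWeight hW]
  gcongr ?_ / _
  exact sum_filter_apply_ne_zero_le (pauliWeight_nonneg _) j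

theorem CHST_le_sum_CLHSTj (hW : U * Vᴴ ∈ unitaryGroup (Fin n → Fin 2) ℂ) :
    CHST n U V ≤ ∑ j, CLHSTj n j U V := by
  simp only [CLHSTj_eq_sum_pauliWeight hW, CHST_eq_sum_pauliWeight hW, ← sum_div]
  gcongr ?_ / _
  exact sum_filter_ne_zero_le_sum_sum_filter_apply_ne_zero (pauliWeight_nonneg _)

theorem sum_CLHSTj_eq_mul_CLHST : ∑ j, CLHSTj n j U V = n * CLHST n U V := by
  rcases n.eq_zero_or_pos with rfl | hn
  · simp
  · rw [CLHST]; field_simp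

end Costs

theorem stmt2 (n : ℕ)
    (U V : Matrix (Fin n → Fin 2) (Fin n → Fin 2) ℂ)
    (hU : U ∈ Matrix.unitaryGroup (Fin n → Fin 2) ℂ)
    (hV : V ∈ Matrix.unitaryGroup (Fin n → Fin 2) ℂ) :
    CLHST n U V ≤ CHST n U V ∧ CHST n U V ≤ (n : ℝ) * CLHST n U V := by
  have hW : U * Vᴴ ∈ unitaryGroup (Fin n → Fin 2) ℂ := mul_mem hU (Unitary.star_mem hV)
  constructor
  · calc CLHST n U V ≤ (1 / n : ℝ) * ∑ _j : Fin n, CHST n U V := by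
          rw [CLHST]; gcongr with j; exact CLHSTj_le_CHST hW j
      _ = (n / n : ℝ) * CHST n U V := by
          rw [sum_const, card_univ, Fintype.card_fin, nsmul_eq_mul]; ring
      _ ≤ CHST n U V := mul_le_of_le_one_left (CHST_nonneg hW) (div_self_le_one _)
  · exact (CHST_le_sum_CLHSTj hW).trans_eq sum_CLHSTj_eq_mul_CLHST

end
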